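/- Triangle-like composition for ε-distance under bind: if μ₁, μ₂ are discrete distributions on U with Δ_{ε₁}(μ₁, μ₂) ≤ δ₁, and f₁, f₂ : U → Dist(V) satisfy Δ_{ε₂}(f₁ u, f₂ u) ≤ δ₂ for every u, then Δ_{ε₁+ε₂}(bind μ₁ f₁, bind μ₂ f₂) ≤ δ₁ + δ₂. -/
import Mathlib


open scoped ENNReal

/-- Probability of an event `E` under a discrete distribution `μ`. -/
noncomputable def Pr {U : Type*} (μ : U → ℝ≥0∞) (E : Set U) : ℝ≥0∞ :=
  ∑' x, E.indicator μ x

/-- The ε-distance `Δ_ε(μ₁, μ₂)`; ENNReal subtraction is truncated at 0,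
implementing the `max(0, ·)` cap. -/
noncomputable def epsDist {U : Type*} (ε : ℝ) (μ₁ μ₂ : U → ℝ≥0∞) : ℝ≥0∞ :=
  ⨆ E : Set U, (Pr μ₁ E - ENNReal.ofReal (Real.exp ε) * Pr μ₂ E)

noncomputable def dbind {U V : Type*} (μ : U → ℝ≥0∞) (f : U → V → ℝ≥0∞) : V → ℝ≥0∞ :=
  fun v => ∑' u, μ u * f u v

lemma Pr_le_total {U : Type*} (μ : U → ℝ≥0∞) (E : Set U) : Pr μ E ≤ ∑' u, μ u :=
  ENNReal.tsum_le_tsum (fun x => Set.indicator_le_self E μ x)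

lemma Pr_dbind {U V : Type*} (μ : U → ℝ≥0∞) (f : U → V → ℝ≥0∞) (E : Set V) :
    Pr (dbind μ f) E = ∑' u, μ u * Pr (f u) E := by
  unfold Pr dbind
  have key : ∀ v, E.indicator (fun v => ∑' u, μ u * f u v) v
      = ∑' u, μ u * E.indicator (f u) v := by
    intro v
    by_cases hv : v ∈ E <;> simp [hv]
  simp_rw [key]
  rw [ENNReal.tsum_comm]
  congr 1
  ext u
  exact ENNReal.tsum_mul_left

/-- Key lemma: the ε-distance bound transfers to expectations of [0,1]-valued functions. -/
lemma key_lemma {U : Type*} (μ₁ μ₂ : U → ℝ≥0∞) (h₂ : ∑' u, μ₂ u = 1)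
    (g : U → ℝ≥0∞) (hg : ∀ u, g u ≤ 1) (ε : ℝ) (δ : ℝ≥0∞)
    (h : epsDist ε μ₁ μ₂ ≤ δ) :
    ∑' u, μ₁ u * g u ≤ ENNReal.ofReal (Real.exp ε) * ∑' u, μ₂ u * g u + δ := by
  set c : ℝ≥0∞ := ENNReal.ofReal (Real.exp ε) with hc
  set E : Set U := {u | c * μ₂ u < μ₁ u} with hE
  have hpt : ∀ u, μ₁ u * g u ≤ c * (μ₂ u * g u) + (μ₁ u - c * μ₂ u) := by
    intro u
    calc μ₁ u * g u ≤ (c * μ₂ u + (μ₁ u - c * μ₂ u)) * g u := by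
          gcongr
          exact le_add_tsub
      _ = c * (μ₂ u * g u) + (μ₁ u - c * μ₂ u) * g u := by ring
      _ ≤ c * (μ₂ u * g u) + (μ₁ u - c * μ₂ u) * 1 := by gcongr; exact hg u
      _ = c * (μ₂ u * g u) + (μ₁ u - c * μ₂ u) := by rw [mul_one]
  have hsub : (∑' u, (μ₁ u - c * μ₂ u)) ≤ δ := by
    have hind : ∀ u, μ₁ u - c * μ₂ u
        = E.indicator μ₁ u - c * E.indicator μ₂ u := by
      intro u
      by_cases hu : u ∈ E
      · simp [Set.indicator_of_mem hu]
      · have hle : μ₁ u ≤ c * μ₂ u := not_lt.1 hu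
        simp [Set.indicator_of_notMem hu, tsub_eq_zero_of_le hle]
    have hle : ∀ u, c * E.indicator μ₂ u ≤ E.indicator μ₁ u := by
      intro u
      by_cases hu : u ∈ E
      · simp only [Set.indicator_of_mem hu]
        exact le_of_lt hu
      · simp [Set.indicator_of_notMem hu]
    calc (∑' u, (μ₁ u - c * μ₂ u))
        = ∑' u, (E.indicator μ₁ u - c * E.indicator μ₂ u) := by
          exact tsum_congr hind
      _ ≤ (∑' u, E.indicator μ₁ u) - ∑' u, c * E.indicator μ₂ u := by
          apply ENNReal.le_sub_of_add_le_right
          · rw [ENNReal.tsum_mul_left]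
            have h1 : Pr μ₂ E ≤ 1 := h₂ ▸ Pr_le_total μ₂ E
            exact ne_top_of_le_ne_top ENNReal.ofReal_ne_top (by
              calc c * Pr μ₂ E ≤ c * 1 := by gcongr
                _ = c := mul_one c)
          rw [← ENNReal.tsum_add]
          exact le_of_eq (tsum_congr fun u => tsub_add_cancel_of_le (hle u))
      _ = Pr μ₁ E - c * Pr μ₂ E := by rw [ENNReal.tsum_mul_left]; rfl
      _ ≤ epsDist ε μ₁ μ₂ := le_iSup (fun E => Pr μ₁ E - c * Pr μ₂ E) E
      _ ≤ δ := h
  calc (∑' u, μ₁ u * g u)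
      ≤ ∑' u, (c * (μ₂ u * g u) + (μ₁ u - c * μ₂ u)) := ENNReal.tsum_le_tsum hpt
    _ = (∑' u, c * (μ₂ u * g u)) + ∑' u, (μ₁ u - c * μ₂ u) := ENNReal.tsum_add
    _ = c * (∑' u, μ₂ u * g u) + ∑' u, (μ₁ u - c * μ₂ u) := by
        rw [ENNReal.tsum_mul_left]
    _ ≤ c * (∑' u, μ₂ u * g u) + δ := by gcongr

theorem epsDist_bind {U V : Type*} [Countable U] [Countable V]
    (μ₁ μ₂ : U → ℝ≥0∞) (h₁ : ∑' u, μ₁ u = 1) (h₂ : ∑' u, μ₂ u = 1)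
    (f₁ f₂ : U → V → ℝ≥0∞)
    (hf₁ : ∀ u, ∑' v, f₁ u v = 1) (hf₂ : ∀ u, ∑' v, f₂ u v = 1)
    (ε₁ ε₂ δ₁ δ₂ : ℝ) (hε₁ : 0 ≤ ε₁) (hε₂ : 0 ≤ ε₂) (hδ₁ : 0 ≤ δ₁) (hδ₂ : 0 ≤ δ₂)
    (hμ : epsDist ε₁ μ₁ μ₂ ≤ ENNReal.ofReal δ₁)
    (hf : ∀ u, epsDist ε₂ (f₁ u) (f₂ u) ≤ ENNReal.ofReal δ₂) :
    epsDist (ε₁ + ε₂) (dbind μ₁ f₁) (dbind μ₂ f₂) ≤ ENNReal.ofReal (δ₁ + δ₂) := by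
  rw [epsDist]
  apply iSup_le
  intro E
  rw [tsub_le_iff_right]
  set c₁ : ℝ≥0∞ := ENNReal.ofReal (Real.exp ε₁) with hc₁
  set c₂ : ℝ≥0∞ := ENNReal.ofReal (Real.exp ε₂) with hc₂
  set d₁ : ℝ≥0∞ := ENNReal.ofReal δ₁ with hd₁
  set d₂ : ℝ≥0∞ := ENNReal.ofReal δ₂ with hd₂
  have hcc : ENNReal.ofReal (Real.exp (ε₁ + ε₂)) = c₁ * c₂ := by
    rw [Real.exp_add, ENNReal.ofReal_mul (Real.exp_pos ε₁).le]
  have hdd : ENNReal.ofReal (δ₁ + δ₂) = d₁ + d₂ := ENNReal.ofReal_add hδ₁ hδ₂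
  set g₁ : U → ℝ≥0∞ := fun u => Pr (f₁ u) E with hg₁
  set g₂ : U → ℝ≥0∞ := fun u => Pr (f₂ u) E with hg₂
  set h : U → ℝ≥0∞ := fun u => g₁ u - d₂ with hh
  have hg₁le1 : ∀ u, g₁ u ≤ 1 := fun u => (hf₁ u) ▸ Pr_le_total (f₁ u) E
  have hh1 : ∀ u, h u ≤ 1 := fun u => le_trans tsub_le_self (hg₁le1 u)
  have hpt : ∀ u, g₁ u ≤ c₂ * g₂ u + d₂ := by
    intro u
    have := le_trans (le_iSup (fun E => Pr (f₁ u) E - c₂ * Pr (f₂ u) E) E) (hf u)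
    rw [tsub_le_iff_right] at this
    calc g₁ u ≤ d₂ + c₂ * g₂ u := this
      _ = c₂ * g₂ u + d₂ := add_comm _ _
  have hh2 : ∀ u, h u ≤ c₂ * g₂ u := by
    intro u
    rw [hh]
    exact tsub_le_iff_right.2 (by rw [add_comm]; exact (add_comm (c₂ * g₂ u) d₂ ▸ hpt u))
  calc Pr (dbind μ₁ f₁) E
      = ∑' u, μ₁ u * g₁ u := Pr_dbind μ₁ f₁ E
    _ ≤ ∑' u, (μ₁ u * h u + μ₁ u * d₂) := by
        apply ENNReal.tsum_le_tsum
        intro u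
        rw [← mul_add]
        gcongr
        exact le_tsub_add
    _ = (∑' u, μ₁ u * h u) + d₂ := by
        rw [ENNReal.tsum_add, ENNReal.tsum_mul_right, h₁, one_mul]
    _ ≤ (c₁ * (∑' u, μ₂ u * h u) + d₁) + d₂ := by
        gcongr
        exact key_lemma μ₁ μ₂ h₂ h hh1 ε₁ d₁ hμ
    _ ≤ (c₁ * (∑' u, μ₂ u * (c₂ * g₂ u)) + d₁) + d₂ := by
        gcongr
        exact hh2 _
    _ = (d₁ + d₂) + (c₁ * c₂) * ∑' u, μ₂ u * g₂ u := by
        have : (∑' u, μ₂ u * (c₂ * g₂ u)) = c₂ * ∑' u, μ₂ u * g₂ u := by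
          rw [← ENNReal.tsum_mul_left]
          exact tsum_congr (fun u => by ring)
        rw [this]
        ring
    _ = ENNReal.ofReal (δ₁ + δ₂)
        + ENNReal.ofReal (Real.exp (ε₁ + ε₂)) * Pr (dbind μ₂ f₂) E := by
        rw [hcc, hdd, Pr_dbind]
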